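/- There exists λ₀ > 0 such that for every λ > λ₀, every energy E with |E| ≤ 2λ and every β ∈ ℝ, the set Ω₀ = ⋃_{k∈ℕ} {x ∈ 𝕋 : cos θ_k(x) = 0} has Lebesgue measure zero. -/

import Mathlib

open MeasureTheory Real Set

noncomputable def Tdbl (x : ℝ) : ℝ := Int.fract (2 * x)

structure GoodPotential (f : ℝ → ℝ) (c₀ : ℝ) : Prop where
  c₀_pos : 0 < c₀
  f_zero : f 0 = 0
  lim_right : Filter.Tendsto f (nhdsWithin 0 (Set.Ioi 0)) (nhds 0)
  lim_left : Filter.Tendsto f (nhdsWithin 1 (Set.Iio 1)) (nhds (1 : ℝ))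
  deriv_right_zero : HasDerivWithinAt f 1 (Set.Ici 0) 0
  hasDeriv : ∀ x ∈ Set.Ioo (0 : ℝ) 1, HasDerivAt f (deriv f x) x
  deriv_cont : ContinuousOn (deriv f) (Set.Ioo (0 : ℝ) 1)
  deriv_mem : ∀ x ∈ Set.Ioo (0 : ℝ) 1, deriv f x ∈ Set.Ioc c₀ 1
  mono : MonotoneOn f (Set.Ico (0 : ℝ) 1)

noncomputable def transferA (f : ℝ → ℝ) (lam E x : ℝ) : Matrix (Fin 2) (Fin 2) ℝ :=
  !![E - lam * f x, -1; 1, 0]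

noncomputable def cocycleA (f : ℝ → ℝ) (lam E x : ℝ) : ℕ → Matrix (Fin 2) (Fin 2) ℝ
  | 0 => 1
  | n + 1 => transferA f lam E (Tdbl^[n + 1] x) * cocycleA f lam E x n

noncomputable def matOpNorm {m : ℕ} (M : Matrix (Fin m) (Fin m) ℝ) : ℝ :=
  ‖LinearMap.toContinuousLinearMap (Matrix.toEuclideanLin M)‖

noncomputable def LnA (f : ℝ → ℝ) (lam E : ℝ) (n : ℕ) : ℝ :=
  (1 / (n : ℝ)) * ∫ x in Set.Ico (0 : ℝ) 1, Real.log (matOpNorm (cocycleA f lam E x n))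
/-- g(x) = (t − f(x))² + 1. -/
noncomputable def gfun (f : ℝ → ℝ) (t x : ℝ) : ℝ := (t - f x) ^ 2 + 1

/-- The inverse cotangent with values in (0, π). -/
noncomputable def arccot (z : ℝ) : ℝ := Real.pi / 2 - Real.arctan z

open Classical in
/-- The angles θ_n(x) of the polar-coordinate cocycle: θ₀(x) = arccot(E/λ − f(x)) + β and
θ_n(x) = φ_n(x) + θ₀(Tⁿx), where φ_n(x) = arccot(λ²·g(Tⁿx)·cot θ_{n−1}(x)) + ⌊θ_{n−1}(x)/π⌋·π
if θ_{n−1}(x) ∉ πℤ, and φ_n(x) = ⌊θ_{n−1}(x)/π⌋·π otherwise. -/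
noncomputable def theta (f : ℝ → ℝ) (lam E β : ℝ) : ℕ → ℝ → ℝ
  | 0 => fun x => arccot (E / lam - f x) + β
  | n + 1 => fun x =>
      (if ∃ m : ℤ, theta f lam E β n x = m * Real.pi then
        (⌊theta f lam E β n x / Real.pi⌋ : ℝ) * Real.pi
      else
        arccot (lam ^ 2 * gfun f (E / lam) (Tdbl^[n + 1] x) * Real.cot (theta f lam E β n x)) +
          (⌊theta f lam E β n x / Real.pi⌋ : ℝ) * Real.pi)
      + (arccot (E / lam - f (Tdbl^[n + 1] x)) + β)

/-- The null set Ω₀ = ⋃ₖ {x : cos θ_k(x) = 0} (within [0,1)). -/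
def Omega0 (f : ℝ → ℝ) (lam E β : ℝ) : Set ℝ :=
  {x | ∃ k : ℕ, Real.cos (theta f lam E β k x) = 0}

/-!
Replace the floor-corrected branch of `arccot` in the recursion for `θ_k` by its continuous lift
`scaleAngle`. Off the dyadic rationals each `θ_k` is then differentiable, and for `λ > 20 / c₀`
induction gives `θ_k' ≥ 2^k c₀ / 20`: differentiating the lifted projective action loses at
most `2^k c₀ / 40` (an AM-GM estimate that needs `λ` large), while `θ₀ ∘ Tᵏ` gains at least
`2^k c₀ / 10`. Hence the level sets of `θ_k` are discrete, and `Ω₀ ∩ [0, 1)` is countable.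
-/

open Filter Topology

/-- The continuous lift of `θ ↦ arccot (a * cot θ)`: the angle of `(a cos θ, sin θ)`, i.e. the
projective action of `diag(a, 1)` on angles. -/
noncomputable def scaleAngle (a θ : ℝ) : ℝ :=
  θ - arctan ((a - 1) * sin θ * cos θ / (sin θ ^ 2 + a * cos θ ^ 2))

lemma arccot_cot {w : ℝ} (h0 : 0 < w) (h1 : w < π) : arccot (cot w) = w := by
  have htan : tan (π / 2 - w) = cot w := by
    rw [tan_eq_sin_div_cos, sin_pi_div_two_sub, cos_pi_div_two_sub, cot_eq_cos_div_sin]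
  rw [arccot, ← htan, arctan_tan (by linarith) (by linarith)]
  ring

lemma cot_add_int_mul_pi (θ : ℝ) (m : ℤ) : cot (θ + m * π) = cot θ := by
  rw [cot_eq_cos_div_sin, cot_eq_cos_div_sin, sin_add_int_mul_pi, cos_add_int_mul_pi,
    mul_div_mul_left _ _ (zpow_ne_zero m (by norm_num))]

lemma sq_add_mul_sq_pos {a s c : ℝ} (ha : 0 < a) (hsc : s ^ 2 + c ^ 2 = 1) :
    0 < s ^ 2 + a * c ^ 2 := by
  rcases (sq_nonneg s).eq_or_lt with hs | hs
  · nlinarith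
  · positivity

lemma mem_Ioo_zero_pi_of_sin_pos {w : ℝ} (hsin : 0 < sin w) (hlo : -(π / 2) < w)
    (hhi : w < 3 * π / 2) : w ∈ Ioo 0 π := by
  constructor
  · by_contra! hw
    linarith [sin_nonpos_of_nonpos_of_neg_pi_le hw (by linarith)]
  · by_contra! hw
    have := sin_nonneg_of_nonneg_of_le_pi (x := w - π) (by linarith) (by linarith)
    rw [sin_sub_pi] at this
    linarith

lemma arccot_mul_cot {a θ : ℝ} (ha : 0 < a) (h0 : 0 < θ) (h1 : θ < π) :
    arccot (a * cot θ) = scaleAngle a θ := by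
  set s := sin θ with hs
  set c := cos θ with hc
  have hsc : s ^ 2 + c ^ 2 = 1 := sin_sq_add_cos_sq θ
  have hspos : 0 < s := sin_pos_of_pos_of_lt_pi h0 h1
  have hD : 0 < s ^ 2 + a * c ^ 2 := sq_add_mul_sq_pos ha hsc
  set T := (a - 1) * s * c / (s ^ 2 + a * c ^ 2) with hT
  have hsinδ : sin (arctan T) = T * cos (arctan T) := by
    rw [sin_arctan, cos_arctan]; ring
  have hcosδ : 0 < cos (arctan T) := cos_arctan_pos T
  have hsT : s - c * T = s / (s ^ 2 + a * c ^ 2) := by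
    rw [hT]; field_simp; linear_combination hsc
  have hcT : c + s * T = a * c / (s ^ 2 + a * c ^ 2) := by
    rw [hT]; field_simp; linear_combination a * c * hsc
  have hsin : sin (θ - arctan T) = cos (arctan T) * (s / (s ^ 2 + a * c ^ 2)) := by
    rw [sin_sub, hsinδ, ← hs, ← hc, ← hsT]; ring
  have hcos : cos (θ - arctan T) = cos (arctan T) * (a * c / (s ^ 2 + a * c ^ 2)) := by
    rw [cos_sub, hsinδ, ← hs, ← hc, ← hcT]; ring
  have hcot : cot (θ - arctan T) = a * cot θ := by
    rw [cot_eq_cos_div_sin, cot_eq_cos_div_sin, hcos, hsin, mul_div_mul_left _ _ hcosδ.ne', ← hs,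
      ← hc]
    field_simp
  obtain ⟨hw0, hwπ⟩ : θ - arctan T ∈ Ioo 0 π := by
    refine mem_Ioo_zero_pi_of_sin_pos ?_ ?_ ?_
    · rw [hsin]; positivity
    · linarith [arctan_lt_pi_div_two T]
    · linarith [neg_pi_div_two_lt_arctan T]
  rw [← hcot, arccot_cot hw0 hwπ, scaleAngle]

lemma scaleAngle_add_int_mul_pi (a θ : ℝ) (m : ℤ) :
    scaleAngle a (θ + m * π) = scaleAngle a θ + m * π := by
  have hsign : ((-1 : ℝ) ^ m) * (-1) ^ m = 1 := by
    rw [← mul_zpow, neg_one_mul, neg_neg, one_zpow]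
  have harg : (a - 1) * ((-1) ^ m * sin θ) * ((-1) ^ m * cos θ) /
      (((-1) ^ m * sin θ) ^ 2 + a * ((-1) ^ m * cos θ) ^ 2) =
      (a - 1) * sin θ * cos θ / (sin θ ^ 2 + a * cos θ ^ 2) := by
    rw [show (a - 1) * ((-1) ^ m * sin θ) * ((-1) ^ m * cos θ) =
        ((-1 : ℝ) ^ m * (-1) ^ m) * ((a - 1) * sin θ * cos θ) by ring,
      show ((-1) ^ m * sin θ) ^ 2 + a * ((-1) ^ m * cos θ) ^ 2 =
        ((-1 : ℝ) ^ m * (-1) ^ m) * (sin θ ^ 2 + a * cos θ ^ 2) by ring, hsign, one_mul, one_mul]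
  rw [scaleAngle, scaleAngle, sin_add_int_mul_pi, cos_add_int_mul_pi, harg]
  ring

open Classical in
lemma scaleAngle_eq_ite {a : ℝ} (ha : 0 < a) (θ : ℝ) :
    scaleAngle a θ = if ∃ m : ℤ, θ = m * π then (⌊θ / π⌋ : ℝ) * π
      else arccot (a * cot θ) + (⌊θ / π⌋ : ℝ) * π := by
  split_ifs with h
  · obtain ⟨m, rfl⟩ := h
    rw [mul_div_cancel_right₀ _ pi_ne_zero, Int.floor_intCast, scaleAngle, sin_int_mul_pi]
    simp
  · set m := ⌊θ / π⌋
    have hθ : θ = (θ - m * π) + m * π := by ring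
    have hlo : (m : ℝ) * π < θ := by
      refine lt_of_le_of_ne ((le_div_iff₀ pi_pos).mp (Int.floor_le _)) ?_
      exact fun h' => h ⟨m, h'.symm⟩
    have hhi : θ < (m + 1) * π := (div_lt_iff₀ pi_pos).mp (Int.lt_floor_add_one _)
    rw [hθ, cot_add_int_mul_pi, scaleAngle_add_int_mul_pi,
      arccot_mul_cot ha (by linarith) (by linarith)]

lemma theta_succ {f : ℝ → ℝ} {lam : ℝ} (hlam : lam ≠ 0) (E β : ℝ) (n : ℕ) (x : ℝ) :
    theta f lam E β (n + 1) x =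
      scaleAngle (lam ^ 2 * gfun f (E / lam) (Tdbl^[n + 1] x)) (theta f lam E β n x) +
        (arccot (E / lam - f (Tdbl^[n + 1] x)) + β) := by
  have ha : 0 < lam ^ 2 * gfun f (E / lam) (Tdbl^[n + 1] x) := by
    unfold gfun; positivity
  rw [scaleAngle_eq_ite ha, theta]

theorem HasDerivAt.scaleAngle {A Θ : ℝ → ℝ} {A' Θ' x : ℝ} (hA : HasDerivAt A A' x)
    (hΘ : HasDerivAt Θ Θ' x) (ha : 0 < A x) :
    HasDerivAt (fun z => scaleAngle (A z) (Θ z))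
      ((A x * Θ' - Real.sin (Θ x) * Real.cos (Θ x) * A') /
        (Real.sin (Θ x) ^ 2 + A x ^ 2 * Real.cos (Θ x) ^ 2)) x := by
  have hsc : Real.sin (Θ x) ^ 2 + Real.cos (Θ x) ^ 2 = 1 := sin_sq_add_cos_sq _
  have hD := sq_add_mul_sq_pos ha hsc
  have hR := sq_add_mul_sq_pos (pow_pos ha 2) hsc
  have h := hΘ.sub (((((hA.sub_const 1).mul hΘ.sin).mul hΘ.cos).div
    ((hΘ.sin.pow 2).add (hA.mul (hΘ.cos.pow 2))) hD.ne').arctan)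
  refine h.congr_deriv ?_
  simp only [Pi.mul_apply, Pi.pow_apply, Pi.add_apply, Pi.div_apply]
  set s := Real.sin (Θ x)
  set c := Real.cos (Θ x)
  set a := A x
  field_simp
  linear_combination (s ^ 2 + a ^ 2 * c ^ 2) * (s ^ 2 + c ^ 2) * Θ' * a * hsc

lemma neg_le_scaleAngle_deriv {a ε Q s c Θ' A' : ℝ} (hε : 0 < ε) (hQ : 0 < Q)
    (hεa : 1 ≤ 4 * ε ^ 2 * a) (hsc : s ^ 2 + c ^ 2 = 1) (hΘ' : ε * Q ≤ Θ') (hA' : |A'| ≤ a * Q) :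
    -(ε * Q) ≤ (a * Θ' - s * c * A') / (s ^ 2 + a ^ 2 * c ^ 2) := by
  have ha : 0 < a := by
    by_contra! ha
    nlinarith [sq_nonneg ε]
  rw [le_div_iff₀ (sq_add_mul_sq_pos (pow_pos ha 2) hsc)]
  have hcross : s * c * A' ≤ |s| * |c| * (a * Q) := by
    rw [← abs_mul]
    exact (le_abs_self _).trans (by rw [abs_mul]; gcongr)
  -- AM-GM: `a |s| |c| ≤ ε a² c² + s² / (4 ε)`, and `s² / (4 ε) ≤ ε a` since `4 ε² a ≥ 1 ≥ s²`.
  have hamgm : a * |s| * |c| ≤ ε * a + ε * s ^ 2 + ε * a ^ 2 * c ^ 2 := by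
    have hs1 : s ^ 2 ≤ 1 := by nlinarith [sq_nonneg c]
    have hid : 4 * ε * (ε * a + ε * s ^ 2 + ε * a ^ 2 * c ^ 2 - a * |s| * |c|) =
        4 * ε ^ 2 * a - s ^ 2 + 4 * ε ^ 2 * s ^ 2 + (2 * ε * a * |c| - |s|) ^ 2 := by
      rw [sub_sq, mul_pow, sq_abs, sq_abs]; ring
    have h4 : 0 ≤ 4 * ε * (ε * a + ε * s ^ 2 + ε * a ^ 2 * c ^ 2 - a * |s| * |c|) := by
      rw [hid]; nlinarith [sq_nonneg (2 * ε * a * |c| - |s|), sq_nonneg (ε * s)]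
    nlinarith
  nlinarith [mul_le_mul_of_nonneg_left hΘ' ha.le, mul_le_mul_of_nonneg_right hamgm hQ.le]

lemma Tdbl_iterate_eq_fract {x : ℝ} (hx : x ∈ Ico (0 : ℝ) 1) (i : ℕ) :
    Tdbl^[i] x = Int.fract (2 ^ i * x) := by
  induction i with
  | zero => simp [Int.fract_eq_self.mpr hx]
  | succ i ih =>
    have h2 : 2 * Int.fract (2 ^ i * x) = 2 ^ (i + 1) * x - ((2 * ⌊2 ^ i * x⌋ : ℤ) : ℝ) := by
      rw [Int.fract]; push_cast; ring
    rw [Function.iterate_succ_apply', ih, Tdbl, h2, Int.fract_sub_intCast]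

lemma hasDerivAt_fract {y : ℝ} (hy : y ≠ ⌊y⌋) : HasDerivAt Int.fract 1 y := by
  have hnhds : Ico (⌊y⌋ : ℝ) (⌊y⌋ + 1) ∈ 𝓝 y :=
    Ico_mem_nhds ((Int.floor_le y).lt_of_ne hy.symm) (Int.lt_floor_add_one y)
  refine ((hasDerivAt_id y).sub_const (⌊y⌋ : ℝ)).congr_of_eventuallyEq ?_
  filter_upwards [hnhds] with z hz
  rw [Int.fract, Int.floor_eq_on_Ico' _ z hz, id]

lemma Tdbl_iterate_mem_Ioo {x : ℝ} (hx : x ∈ Ioo (0 : ℝ) 1) {i : ℕ} (hi : ∀ m : ℤ, 2 ^ i * x ≠ m) :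
    Tdbl^[i] x ∈ Ioo (0 : ℝ) 1 := by
  rw [Tdbl_iterate_eq_fract (Ioo_subset_Ico_self hx)]
  exact ⟨Int.fract_pos.2 (hi _), Int.fract_lt_one _⟩

lemma hasDerivAt_Tdbl_iterate {x : ℝ} (hx : x ∈ Ioo (0 : ℝ) 1) {i : ℕ}
    (hi : ∀ m : ℤ, 2 ^ i * x ≠ m) : HasDerivAt Tdbl^[i] (2 ^ i) x := by
  have hfract : HasDerivAt (fun z => Int.fract (2 ^ i * z)) (2 ^ i) x := by
    have h := (hasDerivAt_fract (hi _)).comp x ((hasDerivAt_id x).const_mul (2 ^ i : ℝ))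
    rwa [one_mul, mul_one] at h
  refine hfract.congr_of_eventuallyEq ?_
  filter_upwards [Ioo_mem_nhds hx.1 hx.2] with z hz
  exact Tdbl_iterate_eq_fract (Ioo_subset_Ico_self hz) i

lemma HasDerivAt.arccot_sub {h : ℝ → ℝ} {h' x : ℝ} (t : ℝ) (hh : HasDerivAt h h' x) :
    HasDerivAt (fun z => arccot (t - h z)) (h' / (1 + (t - h x) ^ 2)) x := by
  have h := ((hh.const_sub t).arctan).const_sub (π / 2)
  refine h.congr_deriv ?_
  ring

namespace GoodPotential

variable {f : ℝ → ℝ} {c₀ : ℝ}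

lemma mem_Icc (hf : GoodPotential f c₀) {y : ℝ} (hy : y ∈ Ioo (0 : ℝ) 1) : f y ∈ Icc 0 1 := by
  constructor
  · simpa [hf.f_zero] using hf.mono ⟨le_rfl, one_pos⟩ (Ioo_subset_Ico_self hy) hy.1.le
  · refine ge_of_tendsto hf.lim_left ?_
    filter_upwards [Ioo_mem_nhdsLT hy.2] with z hz
    exact hf.mono (Ioo_subset_Ico_self hy) ⟨(hy.1.trans hz.1).le, hz.2⟩ hz.1.le

lemma le_deriv_div (hf : GoodPotential f c₀) {y t : ℝ} (hy : y ∈ Ioo (0 : ℝ) 1) (ht : |t| ≤ 2) :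
    c₀ / 10 ≤ deriv f y / (1 + (t - f y) ^ 2) := by
  obtain ⟨hf0, hf1⟩ := hf.mem_Icc hy
  have hb : (t - f y) ^ 2 ≤ 9 := by
    rw [abs_le] at ht
    nlinarith
  rw [le_div_iff₀ (by positivity)]
  nlinarith [(hf.deriv_mem y hy).1, hf.c₀_pos]

end GoodPotential

lemma le_theta_succ_deriv {c₀ lam b fp Q d s c : ℝ} (hc₀ : 0 < c₀) (hc₀lam : 20 < c₀ * lam)
    (hQ : 0 < Q) (hsc : s ^ 2 + c ^ 2 = 1) (hfp : fp ∈ Ioc c₀ 1)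
    (hθ₀ : c₀ / 10 ≤ fp / (1 + b ^ 2)) (hd : c₀ / 40 * Q ≤ d) :
    Q * (c₀ / 20) ≤
      (lam ^ 2 * (b ^ 2 + 1) * d - s * c * (lam ^ 2 * (2 * b * -(fp * Q)))) /
        (s ^ 2 + (lam ^ 2 * (b ^ 2 + 1)) ^ 2 * c ^ 2) + fp * Q / (1 + b ^ 2) := by
  have hεa : 1 ≤ 4 * (c₀ / 40) ^ 2 * (lam ^ 2 * (b ^ 2 + 1)) := by
    have h400 : 400 ≤ (c₀ * lam) ^ 2 := by nlinarith
    nlinarith [mul_nonneg (sq_nonneg (c₀ * lam)) (sq_nonneg b)]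
  have hA' : |lam ^ 2 * (2 * b * -(fp * Q))| ≤ lam ^ 2 * (b ^ 2 + 1) * Q := by
    have h2b : 2 * |b| * fp ≤ b ^ 2 + 1 := by
      nlinarith [sq_nonneg (|b| - 1), sq_abs b, mul_le_mul_of_nonneg_left hfp.2 (abs_nonneg b)]
    calc |lam ^ 2 * (2 * b * -(fp * Q))| = lam ^ 2 * Q * (2 * |b| * fp) := by
          rw [abs_mul, abs_mul, abs_mul, abs_neg, abs_mul, abs_two, abs_of_pos hQ,
            abs_of_pos (hc₀.trans hfp.1), abs_of_nonneg (sq_nonneg lam)]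
          ring
      _ ≤ lam ^ 2 * Q * (b ^ 2 + 1) := by gcongr
      _ = lam ^ 2 * (b ^ 2 + 1) * Q := by ring
  have hfirst := neg_le_scaleAngle_deriv (by positivity) hQ hεa hsc hd hA'
  have hsecond : Q * (c₀ / 10) ≤ fp * Q / (1 + b ^ 2) := by
    rw [mul_div_right_comm, mul_comm Q]
    exact mul_le_mul_of_nonneg_right hθ₀ hQ.le
  linarith [mul_pos hQ hc₀]

lemma exists_hasDerivAt_theta {f : ℝ → ℝ} {c₀ lam E : ℝ} (hf : GoodPotential f c₀)
    (hlam : 20 / c₀ < lam) (hE : |E| ≤ 2 * lam) (β : ℝ) {x : ℝ} (hx : x ∈ Ioo (0 : ℝ) 1)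
    (hdy : ∀ (i : ℕ) (m : ℤ), 2 ^ i * x ≠ m) (n : ℕ) :
    ∃ d, HasDerivAt (theta f lam E β n) d x ∧ 2 ^ n * (c₀ / 20) ≤ d := by
  have hc₀ := hf.c₀_pos
  have hc₀lam : 20 < c₀ * lam := by rwa [div_lt_iff₀' hc₀] at hlam
  have hlam0 : 0 < lam := by nlinarith
  have ht : |E / lam| ≤ 2 := by
    rwa [abs_div, abs_of_pos hlam0, div_le_iff₀ hlam0]
  induction n with
  | zero =>
    refine ⟨_, ((hf.hasDeriv x hx).arccot_sub (E / lam)).add_const β, ?_⟩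
    linarith [hf.le_deriv_div hx ht]
  | succ n ih =>
    obtain ⟨d, hd, hdle⟩ := ih
    set y := Tdbl^[n + 1] x with hy_def
    set b := E / lam - f y with hb_def
    have hy : y ∈ Ioo (0 : ℝ) 1 := Tdbl_iterate_mem_Ioo hx (hdy _)
    have hfT : HasDerivAt (fun z => f (Tdbl^[n + 1] z)) (deriv f y * 2 ^ (n + 1)) x :=
      (hf.hasDeriv y hy).comp x (hasDerivAt_Tdbl_iterate hx (hdy _))
    have hA : HasDerivAt (fun z => lam ^ 2 * gfun f (E / lam) (Tdbl^[n + 1] z))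
        (lam ^ 2 * (2 * b * -(deriv f y * 2 ^ (n + 1)))) x := by
      have h := (((hfT.const_sub (E / lam)).pow 2).add_const 1).const_mul (lam ^ 2)
      exact h.congr_deriv (by ring)
    have ha : 0 < lam ^ 2 * gfun f (E / lam) y := by unfold gfun; positivity
    have htheta := (hA.scaleAngle hd ha).add ((hfT.arccot_sub (E / lam)).add_const β)
    rw [← hy_def, ← hb_def, show gfun f (E / lam) y = b ^ 2 + 1 from rfl] at htheta
    rw [funext (theta_succ hlam0.ne' E β n)]
    refine ⟨_, htheta, le_theta_succ_deriv hc₀ hc₀lam (by positivity)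
      (sin_sq_add_cos_sq _) (hf.deriv_mem y hy) (hf.le_deriv_div hy ht) ?_⟩
    rw [pow_succ]
    linarith

lemma countable_inter_preimage_of_hasDerivAt_ne_zero {g : ℝ → ℝ} {s C : Set ℝ}
    (hC : C.Countable) (hg : ∀ x ∈ s, ∃ d ≠ 0, HasDerivAt g d x) : (s ∩ g ⁻¹' C).Countable := by
  refine (hC.biUnion fun c _ =>
    countable_setOfPred_isolated_right_within (s := {x ∈ s | g x = c})).mono ?_
  rintro x ⟨hxs, hxC⟩
  refine mem_biUnion hxC ⟨⟨hxs, rfl⟩, ?_⟩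
  obtain ⟨d, hd0, hd⟩ := hg x hxs
  rw [← eventually_false_iff_eq_bot]
  have hne : ∀ᶠ z in 𝓝[{z ∈ s | g z = g x} ∩ Ioi x] x, g z ≠ g x :=
    nhdsWithin_mono x (fun z hz => ne_of_gt hz.2) (hd.eventually_ne hd0)
  filter_upwards [hne, self_mem_nhdsWithin] with z hz hzS
  exact hz hzS.1.2

lemma countable_setOf_cos_eq_zero : {θ : ℝ | cos θ = 0}.Countable := by
  refine (countable_range fun m : ℤ => (2 * m + 1) * π / 2).mono fun θ hθ => ?_
  obtain ⟨m, hm⟩ := cos_eq_zero_iff.1 hθ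
  exact ⟨m, hm.symm⟩

lemma countable_setOf_two_pow_mul_eq_intCast :
    {x : ℝ | ∃ (i : ℕ) (m : ℤ), 2 ^ i * x = m}.Countable := by
  refine (countable_iUnion fun i : ℕ => countable_range fun m : ℤ => (m : ℝ) / 2 ^ i).mono ?_
  rintro x ⟨i, m, h⟩
  exact mem_iUnion.2 ⟨i, m, by simp only [← h]; field_simp⟩

/-- the set Ω₀ = ⋃ₖ {x : cos θ_k(x) = 0} has Lebesgue measure zero. -/
theorem omega0_null
    (f : ℝ → ℝ) (c₀ : ℝ) (hf : GoodPotential f c₀) :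
    ∃ lam₀ > (0 : ℝ), ∀ lam : ℝ, lam > lam₀ →
      ∀ E : ℝ, |E| ≤ 2 * lam → ∀ β : ℝ,
        volume (Set.Ico (0 : ℝ) 1 ∩ Omega0 f lam E β) = 0 := by
  refine ⟨20 / c₀, div_pos (by norm_num) hf.c₀_pos, fun lam hlam E hE β => ?_⟩
  set D := {x : ℝ | ∃ (i : ℕ) (m : ℤ), 2 ^ i * x = m}
  have hlevel : ∀ k, (Ioo 0 1 \ D ∩ theta f lam E β k ⁻¹' {θ | cos θ = 0}).Countable := by
    refine fun k => countable_inter_preimage_of_hasDerivAt_ne_zero countable_setOf_cos_eq_zero ?_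
    rintro x ⟨hx, hxD⟩
    obtain ⟨d, hd, hle⟩ := exists_hasDerivAt_theta hf hlam hE β hx (by simpa [D] using hxD) k
    exact ⟨d, (lt_of_lt_of_le (by positivity [hf.c₀_pos]) hle).ne', hd⟩
  refine measure_mono_null ?_
    ((countable_setOf_two_pow_mul_eq_intCast.union (countable_iUnion hlevel)).measure_zero volume)
  rintro x ⟨hx, k, hk⟩
  by_cases hxD : x ∈ D
  · exact Or.inl hxD
  · have hx0 : x ≠ 0 := by rintro rfl; exact hxD ⟨0, 0, by simp⟩
    exact Or.inr (mem_iUnion.2 ⟨k, ⟨⟨hx.1.lt_of_ne' hx0, hx.2⟩, hxD⟩, hk⟩)
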